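/- Let R be an alternative ring, let x, y in R with x*y = y*x, and let z be an element of the commutative center of R (i.e. z commutes with every element of R). Then x*z commutes with y, i.e. (x*z)*y = y*(x*z). -/

import Mathlib

/-!
Linearizing the two alternative laws shows that the associator `(a, b, c)` is alternating. If `z`
commutes with everything, then `(z, x, y) = (x, z, y) - (x, y, z)`, and comparing with the
alternating law gives `3 (x, y, z) = 0`. When moreover `x` and `y` commute, the commutator of
`x * z` and `y` equals `-3 (x, y, z)`.
-/

section Alternative

variable {R : Type*} [NonUnitalNonAssocRing R]

theorem associator_swap_left (hl : ∀ x y : R, (x * x) * y = x * (x * y)) (a b c : R) :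
    associator b a c = -associator a b c := by
  have h := hl (a + b) c
  simp only [associator_apply, add_mul, mul_add] at h ⊢
  linear_combination (norm := abel1) h - hl a c - hl b c

theorem associator_swap_right (hr : ∀ x y : R, (y * x) * x = y * (x * x)) (a b c : R) :
    associator a c b = -associator a b c := by
  have h := hr (b + c) a
  simp only [associator_apply, add_mul, mul_add] at h ⊢
  linear_combination (norm := abel1) h - hr b a - hr c a

theorem associator_left_eq_of_forall_mul_comm {z : R} (hz : ∀ r : R, z * r = r * z) (x y : R) :
    associator z x y = associator x z y - associator x y z := by
  simp only [associator_apply, hz x, hz y, hz (x * y)]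
  abel

theorem three_nsmul_associator_of_forall_mul_comm
    (hl : ∀ x y : R, (x * x) * y = x * (x * y)) (hr : ∀ x y : R, (y * x) * x = y * (x * x))
    {z : R} (hz : ∀ r : R, z * r = r * z) (x y : R) :
    3 • associator x y z = 0 := by
  have h := associator_left_eq_of_forall_mul_comm hz x y
  rw [associator_swap_left hl x z y, associator_swap_right hr x y z, neg_neg] at h
  calc 3 • associator x y z = associator x y z - (-associator x y z - associator x y z) := by abel
    _ = 0 := by rw [← h, sub_self]

end Alternative

theorem stmt_2 {R : Type*} [NonUnitalNonAssocRing R]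
    (hl : ∀ x y : R, (x*x)*y = x*(x*y))
    (hr : ∀ x y : R, (y*x)*x = y*(x*x))
    (x y z : R) (hxy : x*y = y*x) (hz : ∀ r : R, z*r = r*z) :
    (x*z)*y = y*(x*z) := by
  rw [← sub_eq_zero]
  calc (x * z) * y - y * (x * z)
      = associator x z y - associator x y z + associator y x z := by
        rw [associator_apply, associator_apply, associator_apply, hz y, hxy]
        abel
    _ = -(3 • associator x y z) := by
        rw [associator_swap_right hr, associator_swap_left hl]
        abel
    _ = 0 := by rw [three_nsmul_associator_of_forall_mul_comm hl hr hz, neg_zero]
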